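/- arXiv:2511.17051 — 2 statements merged into one kernel-verified Lean document; each statement's English description precedes it below -/
import Mathlib

section
/- Let C be a closed convex cone in a finite-dimensional real vector space and let L be a linear subspace of that space. A subset F of C ∩ L is a face of the closed convex cone C ∩ L if and only if there exists a face F' of C with F = F' ∩ L; moreover, in that case the smallest face of C containing F (the intersection of all faces of C containing F) is such a face F', i.e. F equals the intersection of L with the smallest face of C containing F. -/
/-!
Every face `F'` of the cone `C` contains `0`, so `F' ∩ L` is nonempty and hence a face of
`C ∩ L`. Conversely, let `F` be a face of `C ∩ L`. The points `y ∈ C` for which some open segment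
`(y, q)` with `q ∈ C` meets `F` form a face of `C` containing `F`, so they contain the smallest
such face. If such a `y` also lies in `L`, then so does the far endpoint `q`, since it lies on the
line through `y` and a point of `F ⊆ L`; as `F` is a face of `C ∩ L`, this forces `y ∈ F`.
-/

/-- A face of a convex cone `C`: a nonempty convex subset `F ⊆ C` such that whenever the open
segment between two points of `C` meets `F`, both endpoints lie in `F`. -/
def IsFaceOf {E : Type*} [AddCommGroup E] [Module ℝ E] (F C : Set E) : Prop :=
  F.Nonempty ∧ F ⊆ C ∧ Convex ℝ F ∧
    ∀ x ∈ C, ∀ y ∈ C, (∃ t : ℝ, 0 < t ∧ t < 1 ∧ t • x + (1 - t) • y ∈ F) → x ∈ F ∧ y ∈ F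

open Set

section Faces

variable {E : Type*} [AddCommGroup E] [Module ℝ E] {C F : Set E}

theorem isFaceOf_iff : IsFaceOf F C ↔ F.Nonempty ∧ Convex ℝ F ∧ IsExtreme ℝ C F := by
  have combo_mem_iff {x y : E} : (∃ t : ℝ, 0 < t ∧ t < 1 ∧ t • x + (1 - t) • y ∈ F) ↔
      ∃ z ∈ F, z ∈ openSegment ℝ x y := by
    constructor
    · rintro ⟨t, ht0, ht1, ht⟩
      exact ⟨_, ht, t, 1 - t, ht0, sub_pos.2 ht1, add_sub_cancel _ _, rfl⟩
    · rintro ⟨z, hz, a, b, ha, hb, hab, rfl⟩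
      exact ⟨a, ha, by linarith, by rwa [← hab, add_sub_cancel_left]⟩
  simp only [IsFaceOf, isExtreme_iff, combo_mem_iff]
  constructor
  · rintro ⟨hne, hsub, hconv, hext⟩
    exact ⟨hne, hconv, hsub, fun x hx y hy z hz hzxy => (hext x hx y hy ⟨z, hz, hzxy⟩).1⟩
  · rintro ⟨hne, hconv, hsub, hext⟩
    refine ⟨hne, hsub, hconv, fun x hx y hy ⟨z, hz, hzxy⟩ => ⟨hext hx hy hz hzxy, ?_⟩⟩
    exact hext hy hx hz (by rwa [openSegment_symm])

theorem isFaceOf_self (hC : Convex ℝ C) (hne : C.Nonempty) : IsFaceOf C C :=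
  isFaceOf_iff.2 ⟨hne, hC, .rfl⟩

theorem isFaceOf_sInter {𝒮 : Set (Set E)} (h𝒮 : 𝒮.Nonempty) (hne : (⋂₀ 𝒮).Nonempty)
    (hface : ∀ F ∈ 𝒮, IsFaceOf F C) : IsFaceOf (⋂₀ 𝒮) C :=
  isFaceOf_iff.2 ⟨hne, convex_sInter fun F hF => (isFaceOf_iff.1 (hface F hF)).2.1,
    isExtreme_sInter h𝒮 fun F hF => (isFaceOf_iff.1 (hface F hF)).2.2⟩

theorem IsFaceOf.inter_right {L : Set E} (h : IsFaceOf F C) (hL : Convex ℝ L)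
    (hne : (F ∩ L).Nonempty) : IsFaceOf (F ∩ L) (C ∩ L) := by
  obtain ⟨-, hF, hext⟩ := isFaceOf_iff.1 h
  refine isFaceOf_iff.2 ⟨hne, hF.inter hL, inter_subset_inter_left _ hext.subset, ?_⟩
  exact fun x hx y hy z hz hzxy => ⟨hext.2 hx.1 hy.1 hz.1 hzxy, hx.2⟩

theorem IsFaceOf.zero_mem (h : IsFaceOf F C) (hC : ∀ c : ℝ, 0 ≤ c → ∀ x ∈ C, c • x ∈ C) :
    (0 : E) ∈ F := by
  obtain ⟨⟨w, hw⟩, -, hext⟩ := isFaceOf_iff.1 h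
  have hwC : w ∈ C := hext.subset hw
  have hmid : w ∈ openSegment ℝ ((2 : ℝ) • w) 0 :=
    ⟨1 / 2, 1 / 2, by norm_num, by norm_num, by norm_num, by module⟩
  exact hext.right_mem_of_mem_openSegment (hC 2 (by norm_num) w hwC)
    (by simpa using hC 0 le_rfl w hwC) hw hmid

theorem mem_openSegment_iff_exists_add_smul_sub_eq {f y q : E} :
    f ∈ openSegment ℝ y q ↔ ∃ ε : ℝ, 0 < ε ∧ f + ε • (f - y) = q := by
  constructor
  · rintro ⟨a, b, ha, hb, hab, rfl⟩
    refine ⟨a / b, div_pos ha hb, ?_⟩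
    obtain rfl : b = 1 - a := by linarith
    match_scalars <;> field_simp <;> ring
  · rintro ⟨ε, hε, rfl⟩
    refine ⟨ε / (1 + ε), 1 / (1 + ε), by positivity, by positivity, by field_simp; ring, ?_⟩
    match_scalars <;> field_simp; ring

theorem Convex.add_smul_sub_mem_of_le (hC : Convex ℝ C) {f y : E} {ε δ : ℝ} (hf : f ∈ C)
    (hε : f + ε • (f - y) ∈ C) (hδ : 0 ≤ δ) (hδε : δ ≤ ε) : f + δ • (f - y) ∈ C := by
  rcases hδ.eq_or_lt with rfl | hδ
  · simpa using hf
  have hε0 : 0 < ε := hδ.trans_le hδε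
  convert hC.add_smul_sub_mem hf hε ⟨div_nonneg hδ.le hε0.le, div_le_one_of_le₀ hδε hε0.le⟩
    using 2
  rw [add_sub_cancel_left, smul_smul, div_mul_cancel₀ _ hε0.ne']

theorem Convex.exists_mem_openSegment_of_mem_openSegment (hC : Convex ℝ C) {x y q w f : E}
    (hy : y ∈ C) (hq : q ∈ C) (hw : w ∈ openSegment ℝ x y) (hf : f ∈ openSegment ℝ w q) :
    ∃ r ∈ C, f ∈ openSegment ℝ x r := by
  obtain ⟨a, b, ha, hb, hab, rfl⟩ := hw
  obtain ⟨c, d, hc, hd, hcd, rfl⟩ := hf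
  have hs : 0 < c * b + d := by positivity
  -- `r` is where the ray from `x` through `f` meets the side `[y, q]` of the triangle `x y q`.
  refine ⟨(c * b / (c * b + d)) • y + (d / (c * b + d)) • q,
    hC hy hq (by positivity) (by positivity) (by field_simp),
    c * a, c * b + d, by positivity, hs, by linear_combination c * hab + hcd, ?_⟩
  match_scalars <;> field_simp

/-- For convex `F ⊆ C` this is the smallest face of `C` containing `F`. -/
def faceSpan (C F : Set E) : Set E :=
  {y ∈ C | ∃ f ∈ F, ∃ q ∈ C, f ∈ openSegment ℝ y q}

theorem subset_faceSpan (hFC : F ⊆ C) : F ⊆ faceSpan C F :=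
  fun f hf => ⟨hFC hf, f, hf, f, hFC hf, by simp⟩

theorem convex_faceSpan (hC : Convex ℝ C) (hF : Convex ℝ F) : Convex ℝ (faceSpan C F) := by
  rintro y₁ ⟨hy₁, f₁, hf₁, _, hq₁, h₁⟩ y₂ ⟨hy₂, f₂, hf₂, _, hq₂, h₂⟩ a b ha hb hab
  obtain ⟨ε₁, hε₁, rfl⟩ := mem_openSegment_iff_exists_add_smul_sub_eq.1 h₁
  obtain ⟨ε₂, hε₂, rfl⟩ := mem_openSegment_iff_exists_add_smul_sub_eq.1 h₂
  set ε := min ε₁ ε₂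
  have hq₁' : f₁ + ε • (f₁ - y₁) ∈ C :=
    hC.add_smul_sub_mem_of_le (hC.openSegment_subset hy₁ hq₁ h₁) hq₁ (by positivity)
      (min_le_left _ _)
  have hq₂' : f₂ + ε • (f₂ - y₂) ∈ C :=
    hC.add_smul_sub_mem_of_le (hC.openSegment_subset hy₂ hq₂ h₂) hq₂ (by positivity)
      (min_le_right _ _)
  refine ⟨hC hy₁ hy₂ ha hb hab, a • f₁ + b • f₂, hF hf₁ hf₂ ha hb hab, _, hC hq₁' hq₂' ha hb hab,
    mem_openSegment_iff_exists_add_smul_sub_eq.2 ⟨ε, lt_min hε₁ hε₂, ?_⟩⟩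
  obtain rfl : b = 1 - a := by linarith
  module

theorem isExtreme_faceSpan (hC : Convex ℝ C) : IsExtreme ℝ C (faceSpan C F) := by
  refine ⟨sep_subset _ _, fun x hx y hy w ⟨_, f, hf, q, hq, hfwq⟩ hw => ⟨hx, f, hf, ?_⟩⟩
  exact hC.exists_mem_openSegment_of_mem_openSegment hy hq hw hfwq

theorem isFaceOf_faceSpan (hC : Convex ℝ C) (hFC : F ⊆ C) (hF : Convex ℝ F)
    (hne : F.Nonempty) : IsFaceOf (faceSpan C F) C :=
  isFaceOf_iff.2 ⟨hne.mono (subset_faceSpan hFC), convex_faceSpan hC hF, isExtreme_faceSpan hC⟩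

theorem isFaceOf_sInter_isFaceOf_supset (hC : Convex ℝ C) (hFC : F ⊆ C) (hne : F.Nonempty) :
    IsFaceOf (⋂₀ {F' : Set E | IsFaceOf F' C ∧ F ⊆ F'}) C :=
  isFaceOf_sInter ⟨C, isFaceOf_self hC (hne.mono hFC), hFC⟩
    (hne.mono (subset_sInter fun _ h => h.2)) fun _ h => h.1

theorem IsFaceOf.eq_sInter_isFaceOf_supset_inter (hC : Convex ℝ C) {L : Submodule ℝ E}
    (h : IsFaceOf F (C ∩ L)) : F = (⋂₀ {F' : Set E | IsFaceOf F' C ∧ F ⊆ F'}) ∩ L := by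
  obtain ⟨hne, hF, hext⟩ := isFaceOf_iff.1 h
  have hFC : F ⊆ C := fun _ hf => (hext.subset hf).1
  refine Subset.antisymm (fun f hf => ⟨subset_sInter (fun _ h => h.2) hf, (hext.subset hf).2⟩) ?_
  rintro y ⟨hyG, hyL⟩
  obtain ⟨hyC, f, hf, q, hq, hfyq⟩ : y ∈ faceSpan C F :=
    hyG _ ⟨isFaceOf_faceSpan hC hFC hF hne, subset_faceSpan hFC⟩
  obtain ⟨ε, -, rfl⟩ := mem_openSegment_iff_exists_add_smul_sub_eq.1 hfyq
  have hfL : f ∈ L := (hext.subset hf).2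
  have hqL : f + ε • (f - y) ∈ L := L.add_mem hfL (L.smul_mem _ (L.sub_mem hfL hyL))
  exact hext.2 ⟨hyC, hyL⟩ ⟨hq, hqL⟩ hf hfyq

end Faces

theorem faces_of_slices_general {E : Type*} [NormedAddCommGroup E] [NormedSpace ℝ E]
    (C : Set E) (hCconv : Convex ℝ C)
    (hCcone : ∀ c : ℝ, 0 ≤ c → ∀ x ∈ C, c • x ∈ C)
    (L : Submodule ℝ E) (F : Set E) :
    (IsFaceOf F (C ∩ (L : Set E)) ↔ ∃ F', IsFaceOf F' C ∧ F = F' ∩ (L : Set E)) ∧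
    (IsFaceOf F (C ∩ (L : Set E)) →
      IsFaceOf (⋂₀ {F' : Set E | IsFaceOf F' C ∧ F ⊆ F'}) C ∧
      F = (⋂₀ {F' : Set E | IsFaceOf F' C ∧ F ⊆ F'}) ∩ (L : Set E)) := by
  have minimal (h : IsFaceOf F (C ∩ L)) :
      IsFaceOf (⋂₀ {F' : Set E | IsFaceOf F' C ∧ F ⊆ F'}) C ∧
        F = (⋂₀ {F' : Set E | IsFaceOf F' C ∧ F ⊆ F'}) ∩ L := by
    obtain ⟨hne, -, hext⟩ := isFaceOf_iff.1 h
    exact ⟨isFaceOf_sInter_isFaceOf_supset hCconv (fun _ hf => (hext.subset hf).1) hne,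
      h.eq_sInter_isFaceOf_supset_inter hCconv⟩
  refine ⟨⟨fun h => ⟨_, minimal h⟩, ?_⟩, minimal⟩
  rintro ⟨F', hF', rfl⟩
  exact hF'.inter_right L.convex ⟨0, hF'.zero_mem hCcone, L.zero_mem⟩

/-- **Faces of linear slices of closed convex cones.**
Let `C` be a closed convex cone in a finite-dimensional real vector space and `L` a linear
subspace.  A subset `F` of `C ∩ L` is a face of `C ∩ L` if and only if it is the intersection
of `L` with a face `F'` of `C`; moreover, in that case the smallest face of `C` containing `F`
(the intersection of all faces of `C` containing `F`) is itself a face of `C`, and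
`F` equals the intersection of `L` with it. -/
theorem faces_of_slices {E : Type*} [NormedAddCommGroup E] [NormedSpace ℝ E]
    [FiniteDimensional ℝ E]
    (C : Set E) (hCcl : IsClosed C) (hCconv : Convex ℝ C)
    (hCcone : ∀ c : ℝ, 0 ≤ c → ∀ x ∈ C, c • x ∈ C)
    (L : Submodule ℝ E) (F : Set E) (hF : F ⊆ C ∩ (L : Set E)) :
    (IsFaceOf F (C ∩ (L : Set E)) ↔ ∃ F', IsFaceOf F' C ∧ F = F' ∩ (L : Set E)) ∧
    (IsFaceOf F (C ∩ (L : Set E)) →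
      IsFaceOf (⋂₀ {F' : Set E | IsFaceOf F' C ∧ F ⊆ F'}) C ∧
      F = (⋂₀ {F' : Set E | IsFaceOf F' C ∧ F ⊆ F'}) ∩ (L : Set E)) :=
  faces_of_slices_general C hCconv hCcone L F
end

section
/- The following are equivalent: (a) the subspaces satisfy the three Ishi axioms [V1] A·B ∈ V_ik for all A ∈ V_ij, B ∈ V_jk (1 ≤ i ≤ j ≤ k ≤ r), [V2] Aᵀ·B ∈ V_jk for all A ∈ V_ij, B ∈ V_ik (1 ≤ i ≤ j < k ≤ r), and [V3] Aᵀ·A ∈ ℝ·I_{n_j} for all A ∈ V_ij (1 ≤ i ≤ j ≤ r); (b) for every T ∈ 𝕋_++ the map 𝒯_T : X ↦ Tᵀ·X·T maps V into V and restricts to a bijection of K = S^n_++ ∩ V onto itself, the set {𝒯_T restricted to V : T ∈ 𝕋_++} is a group under composition of linear automorphisms of V, and this group acts simply transitively on K, i.e. for all X, Y ∈ K there is exactly one T ∈ 𝕋_++ with Tᵀ·X·T = Y. -/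
/-!
Under [V1] the set `𝕋` is a subalgebra of the matrix algebra, so `𝕋₊₊` is a group; and [V1]–[V3]
make `V` invariant under `X ↦ Tᵀ X T`, because every summand `T_kiᵀ X_kl T_lj` of a block of
`Tᵀ X T` has the form `Aᵀ B` with `A`, `B` in a common block row, to which [V2] or polarized [V3]
applies. Simple transitivity then amounts to `X = Tᵀ T` having exactly one solution `T ∈ 𝕋₊₊` for
each `X ∈ K`. Block Cholesky elimination produces one: [V2] and [V3] keep every Schur complement
in `V`, so each pivot block is a positive multiple of the identity. Two solutions differ by an
orthogonal element of `𝕋₊₊`, which is upper and lower block triangular with positive scalar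
diagonal blocks, hence the identity.

Conversely, the products in [V1]–[V3] appear as blocks of `Tᵀ X T` for `T = 1 + N`, `N` made of
one or two off-diagonal blocks, and `X = 1` or `X` a symmetric matrix with two blocks.
-/

noncomputable section
open scoped Classical
open Matrix

/-- An extreme ray of `C`: a face whose linear span is one-dimensional. -/
def IsExtremeRayOf {E : Type*} [AddCommGroup E] [Module ℝ E] (R C : Set E) : Prop :=
  IsFaceOf R C ∧ Module.finrank ℝ (Submodule.span ℝ R) = 1

/-- `x` is a sum of at most `m` points, each lying on an extreme ray of `C`. -/
def SumExtreme {E : Type*} [AddCommGroup E] [Module ℝ E] (C : Set E) (m : ℕ) (x : E) : Prop :=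
  ∃ (k : ℕ) (f : Fin k → E), k ≤ m ∧ (∀ i, ∃ R, IsExtremeRayOf R C ∧ f i ∈ R) ∧ x = ∑ i, f i

/-- The Carathéodory number of the cone `C`. -/
def caraNumber {E : Type*} [AddCommGroup E] [Module ℝ E] (C : Set E) : ℕ :=
  sInf {m | ∀ x ∈ C, SumExtreme C m x}

/-- The ray generated by a point. -/
def ray {E : Type*} [AddCommGroup E] [Module ℝ E] (A : E) : Set E :=
  {X | ∃ c : ℝ, 0 ≤ c ∧ X = c • A}

/-- The trace (Frobenius) inner product on spaces of rectangular real matrices. -/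
def trInner {a b : Type*} [Fintype a] [Fintype b] (X Y : Matrix a b ℝ) : ℝ :=
  Matrix.trace (Xᵀ * Y)

/-- `y` is the orthogonal projection of `x` onto the subspace `W` (with respect to the
trace inner product). -/
def IsProjOn {a b : Type*} [Fintype a] [Fintype b] (W : Set (Matrix a b ℝ))
    (x y : Matrix a b ℝ) : Prop :=
  y ∈ W ∧ ∀ w ∈ W, trInner (x - y) w = 0

/-- The image of the set `S` under orthogonal projection onto the subspace `W`. -/
def projSet {a b : Type*} [Fintype a] [Fintype b] (W S : Set (Matrix a b ℝ)) :
    Set (Matrix a b ℝ) :=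
  {y | ∃ x ∈ S, IsProjOn W x y}

/-- The cone of positive semidefinite matrices. -/
def PSD (ι : Type*) [Fintype ι] : Set (Matrix ι ι ℝ) := {X | X.PosSemidef}

variable {r : ℕ}

/-- Index type for an `n₁ + ⋯ + n_r` block partition. -/
abbrev BIx (n : Fin r → ℕ) : Type := Σ i : Fin r, Fin (n i)

/-- The `(i,j)` block of a block matrix. -/
def blk {n : Fin r → ℕ} (X : Matrix (BIx n) (BIx n) ℝ) (i j : Fin r) :
    Matrix (Fin (n i)) (Fin (n j)) ℝ :=
  Matrix.of fun a b => X ⟨i, a⟩ ⟨j, b⟩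

/-- The space `V` of symmetric block matrices whose blocks lie in the subspaces `Vb i j`
(for `i ≤ j`; the diagonal subspaces `Vb i i` are required elsewhere to be `ℝ·I`). -/
def Vset (n : Fin r → ℕ)
    (Vb : ∀ i j : Fin r, Submodule ℝ (Matrix (Fin (n i)) (Fin (n j)) ℝ)) :
    Set (Matrix (BIx n) (BIx n) ℝ) :=
  {X | X.IsSymm ∧ ∀ i j : Fin r, i ≤ j → blk X i j ∈ Vb i j}

/-- The set `𝕋` of upper block-triangular matrices with diagonal blocks in `ℝ·I` and
off-diagonal blocks in the `Vb i j`. -/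
def TT (n : Fin r → ℕ)
    (Vb : ∀ i j : Fin r, Submodule ℝ (Matrix (Fin (n i)) (Fin (n j)) ℝ)) :
    Set (Matrix (BIx n) (BIx n) ℝ) :=
  {T | (∀ i j : Fin r, j < i → blk T i j = 0) ∧
    (∀ i : Fin r, ∃ c : ℝ, blk T i i = c • (1 : Matrix (Fin (n i)) (Fin (n i)) ℝ)) ∧
    (∀ i j : Fin r, i < j → blk T i j ∈ Vb i j)}

/-- The set `𝕋₊₊ ⊆ 𝕋` of matrices with positive diagonal entries. -/
def TTpp (n : Fin r → ℕ)
    (Vb : ∀ i j : Fin r, Submodule ℝ (Matrix (Fin (n i)) (Fin (n j)) ℝ)) :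
    Set (Matrix (BIx n) (BIx n) ℝ) :=
  {T | (∀ i j : Fin r, j < i → blk T i j = 0) ∧
    (∀ i : Fin r, ∃ c : ℝ, 0 < c ∧ blk T i i = c • (1 : Matrix (Fin (n i)) (Fin (n i)) ℝ)) ∧
    (∀ i j : Fin r, i < j → blk T i j ∈ Vb i j)}

/-- The Ishi spectrahedral cone `K = S^n_{++} ∩ V`. -/
def Kcone (n : Fin r → ℕ)
    (Vb : ∀ i j : Fin r, Submodule ℝ (Matrix (Fin (n i)) (Fin (n j)) ℝ)) :
    Set (Matrix (BIx n) (BIx n) ℝ) :=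
  {X | X.PosDef ∧ X ∈ Vset n Vb}

/-- The closure `S^n_+ ∩ V` of the Ishi spectrahedral cone. -/
def KclSet (n : Fin r → ℕ)
    (Vb : ∀ i j : Fin r, Submodule ℝ (Matrix (Fin (n i)) (Fin (n j)) ℝ)) :
    Set (Matrix (BIx n) (BIx n) ℝ) :=
  {X | X.PosSemidef ∧ X ∈ Vset n Vb}

/-- The dual cone `D = proj_V (S^n_+)` of `K` in `V`. -/
def dualD (n : Fin r → ℕ)
    (Vb : ∀ i j : Fin r, Submodule ℝ (Matrix (Fin (n i)) (Fin (n j)) ℝ)) :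
    Set (Matrix (BIx n) (BIx n) ℝ) :=
  projSet (Vset n Vb) (PSD (BIx n))

/-- The subspace `V^B` of matrices of `V` supported on blocks indexed by `B × B`. -/
def VBset (n : Fin r → ℕ)
    (Vb : ∀ i j : Fin r, Submodule ℝ (Matrix (Fin (n i)) (Fin (n j)) ℝ))
    (B : Finset (Fin r)) : Set (Matrix (BIx n) (BIx n) ℝ) :=
  {X | X ∈ Vset n Vb ∧ ∀ i j : Fin r, i ≤ j → (i ∉ B ∨ j ∉ B) → blk X i j = 0}

/-- The matrix `I^B` whose diagonal blocks indexed by `B` are identity blocks and whose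
other blocks vanish. -/
def IB (n : Fin r → ℕ) (B : Finset (Fin r)) : Matrix (BIx n) (BIx n) ℝ :=
  Matrix.of fun a b => if a = b ∧ a.1 ∈ B then 1 else 0

/-- The face `F_{T,B} = Tᵀ·(S^n_+ ∩ V^B)·T` of the closure `S^n_+ ∩ V`. -/
def FTB (n : Fin r → ℕ)
    (Vb : ∀ i j : Fin r, Submodule ℝ (Matrix (Fin (n i)) (Fin (n j)) ℝ))
    (T : Matrix (BIx n) (BIx n) ℝ) (B : Finset (Fin r)) :
    Set (Matrix (BIx n) (BIx n) ℝ) :=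
  {Y | ∃ X, Matrix.PosSemidef X ∧ X ∈ VBset n Vb B ∧ Y = Tᵀ * X * T}

/-- The face `F^*_{T,N} = proj_V (T · proj_{V^N}(S^n_+) · Tᵀ)` of the dual cone. -/
def FstarTN (n : Fin r → ℕ)
    (Vb : ∀ i j : Fin r, Submodule ℝ (Matrix (Fin (n i)) (Fin (n j)) ℝ))
    (T : Matrix (BIx n) (BIx n) ℝ) (N : Finset (Fin r)) :
    Set (Matrix (BIx n) (BIx n) ℝ) :=
  {Z | ∃ Y ∈ projSet (VBset n Vb N) (PSD (BIx n)), IsProjOn (Vset n Vb) (T * Y * Tᵀ) Z}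


section Blocks

variable {n : Fin r → ℕ}

@[simp] lemma blk_apply (X : Matrix (BIx n) (BIx n) ℝ) (i j : Fin r) (a : Fin (n i))
    (b : Fin (n j)) : blk X i j a b = X ⟨i, a⟩ ⟨j, b⟩ := rfl

@[ext] lemma blk_ext {X Y : Matrix (BIx n) (BIx n) ℝ} (h : ∀ i j, blk X i j = blk Y i j) :
    X = Y := by
  ext ⟨i, a⟩ ⟨j, b⟩
  exact congrFun₂ (h i j) a b

@[simp] lemma blk_add (X Y : Matrix (BIx n) (BIx n) ℝ) (i j : Fin r) :
    blk (X + Y) i j = blk X i j + blk Y i j := rfl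

@[simp] lemma blk_sub (X Y : Matrix (BIx n) (BIx n) ℝ) (i j : Fin r) :
    blk (X - Y) i j = blk X i j - blk Y i j := rfl

@[simp] lemma blk_smul (c : ℝ) (X : Matrix (BIx n) (BIx n) ℝ) (i j : Fin r) :
    blk (c • X) i j = c • blk X i j := rfl

@[simp] lemma blk_zero (i j : Fin r) : blk (0 : Matrix (BIx n) (BIx n) ℝ) i j = 0 := rfl

lemma blk_transpose (X : Matrix (BIx n) (BIx n) ℝ) (i j : Fin r) :
    blk Xᵀ i j = (blk X j i)ᵀ := rfl

lemma blk_mul (X Y : Matrix (BIx n) (BIx n) ℝ) (i j : Fin r) :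
    blk (X * Y) i j = ∑ k, blk X i k * blk Y k j := by
  ext a b
  simp only [blk_apply, Matrix.mul_apply, Matrix.sum_apply]
  rw [← Finset.univ_sigma_univ, Finset.sum_sigma]

@[simp] lemma blk_one_self (i : Fin r) : blk (1 : Matrix (BIx n) (BIx n) ℝ) i i = 1 := by
  ext a b
  simp [Matrix.one_apply]

lemma blk_one_of_ne {i j : Fin r} (h : i ≠ j) : blk (1 : Matrix (BIx n) (BIx n) ℝ) i j = 0 := by
  ext a b
  simp [h]

lemma Matrix.IsSymm.blk_eq {X : Matrix (BIx n) (BIx n) ℝ} (hX : X.IsSymm) (i j : Fin r) :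
    blk X j i = (blk X i j)ᵀ := by
  rw [← blk_transpose, hX.eq]

lemma Matrix.BlockTriangular.blk_eq_zero {T : Matrix (BIx n) (BIx n) ℝ}
    (hT : T.BlockTriangular Sigma.fst) {i j : Fin r} (h : j < i) : blk T i j = 0 := by
  ext a b
  exact hT h

lemma blockTriangular_iff_blk {T : Matrix (BIx n) (BIx n) ℝ} :
    T.BlockTriangular Sigma.fst ↔ ∀ i j : Fin r, j < i → blk T i j = 0 :=
  ⟨fun hT _ _ h => hT.blk_eq_zero h, fun h p q hpq => congrFun₂ (h p.1 q.1 hpq) p.2 q.2⟩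

lemma Matrix.BlockTriangular.blk_mul_self {T U : Matrix (BIx n) (BIx n) ℝ}
    (hT : T.BlockTriangular Sigma.fst) (hU : U.BlockTriangular Sigma.fst) (i : Fin r) :
    blk (T * U) i i = blk T i i * blk U i i := by
  rw [blk_mul, Finset.sum_eq_single i (fun k _ hk => ?_) (by simp)]
  rcases hk.lt_or_gt with h | h
  · rw [hT.blk_eq_zero h, Matrix.zero_mul]
  · rw [hU.blk_eq_zero h, Matrix.mul_zero]

def singleBlock (i j : Fin r) (A : Matrix (Fin (n i)) (Fin (n j)) ℝ) :
    Matrix (BIx n) (BIx n) ℝ :=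
  Matrix.of fun p q =>
    if h : p.1 = i ∧ q.1 = j then A (Fin.cast (congrArg n h.1) p.2) (Fin.cast (congrArg n h.2) q.2)
    else 0

/-- Blocks of `1` act as Kronecker deltas here, which avoids casts between `Fin (n k)` and
`Fin (n i)` when `k = i`. -/
lemma blk_singleBlock (i j : Fin r) (A : Matrix (Fin (n i)) (Fin (n j)) ℝ) (k l : Fin r) :
    blk (singleBlock i j A) k l = blk (n := n) 1 k i * A * blk (n := n) 1 j l := by
  by_cases hk : k = i
  · subst hk
    by_cases hl : l = j
    · subst hl
      ext a b
      simp [singleBlock]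
    · rw [blk_one_of_ne (Ne.symm hl), Matrix.mul_zero]
      ext a b
      simp [singleBlock, hl]
  · rw [blk_one_of_ne hk, Matrix.zero_mul, Matrix.zero_mul]
    ext a b
    simp [singleBlock, hk]

@[simp] lemma blk_singleBlock_self (i j : Fin r) (A : Matrix (Fin (n i)) (Fin (n j)) ℝ) :
    blk (singleBlock i j A) i j = A := by
  rw [blk_singleBlock, blk_one_self, blk_one_self, Matrix.one_mul, Matrix.mul_one]

lemma blk_singleBlock_of_ne {i j k l : Fin r} (h : ¬(k = i ∧ l = j))
    (A : Matrix (Fin (n i)) (Fin (n j)) ℝ) : blk (singleBlock i j A) k l = 0 := by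
  rw [blk_singleBlock]
  rcases not_and_or.mp h with h | h
  · rw [blk_one_of_ne h, Matrix.zero_mul, Matrix.zero_mul]
  · rw [blk_one_of_ne (Ne.symm h), Matrix.mul_zero]

lemma blk_singleBlock_mul (i j : Fin r) (A : Matrix (Fin (n i)) (Fin (n j)) ℝ)
    (M : Matrix (BIx n) (BIx n) ℝ) (k l : Fin r) :
    blk (singleBlock i j A * M) k l = blk (n := n) 1 k i * A * blk M j l := by
  simp_rw [blk_mul, blk_singleBlock, Matrix.mul_assoc, ← Matrix.mul_sum, ← blk_mul,
    Matrix.one_mul]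

lemma blk_mul_singleBlock (M : Matrix (BIx n) (BIx n) ℝ) (i j : Fin r)
    (A : Matrix (Fin (n i)) (Fin (n j)) ℝ) (k l : Fin r) :
    blk (M * singleBlock i j A) k l = blk M k i * A * blk (n := n) 1 j l := by
  simp_rw [blk_mul, blk_singleBlock, ← Matrix.mul_assoc, ← Matrix.sum_mul, ← blk_mul,
    Matrix.mul_one]

lemma blk_mul_singleBlock_mul (X : Matrix (BIx n) (BIx n) ℝ) (i j : Fin r)
    (A : Matrix (Fin (n i)) (Fin (n j)) ℝ) (Y : Matrix (BIx n) (BIx n) ℝ) (k l : Fin r) :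
    blk (X * singleBlock i j A * Y) k l = blk X k i * A * blk Y j l := by
  rw [Matrix.mul_assoc, blk_mul]
  simp_rw [blk_singleBlock_mul, ← Matrix.mul_assoc, ← Matrix.sum_mul, ← blk_mul,
    Matrix.mul_one]

lemma blk_singleBlock_mul_self (i j : Fin r) (A : Matrix (Fin (n i)) (Fin (n j)) ℝ)
    (M : Matrix (BIx n) (BIx n) ℝ) (l : Fin r) :
    blk (singleBlock i j A * M) i l = A * blk M j l := by
  rw [blk_singleBlock_mul, blk_one_self, Matrix.one_mul]

lemma blk_singleBlock_mul_of_ne {i k : Fin r} (h : k ≠ i) (j : Fin r)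
    (A : Matrix (Fin (n i)) (Fin (n j)) ℝ) (M : Matrix (BIx n) (BIx n) ℝ) (l : Fin r) :
    blk (singleBlock i j A * M) k l = 0 := by
  rw [blk_singleBlock_mul, blk_one_of_ne h, Matrix.zero_mul, Matrix.zero_mul]

lemma singleBlock_smul (i j : Fin r) (c : ℝ) (A : Matrix (Fin (n i)) (Fin (n j)) ℝ) :
    singleBlock i j (c • A) = c • singleBlock i j A := by
  ext k l : 1
  rw [blk_smul, blk_singleBlock, blk_singleBlock, Matrix.mul_smul, Matrix.smul_mul]

lemma singleBlock_mul_mul_singleBlock (i j : Fin r) (A : Matrix (Fin (n i)) (Fin (n j)) ℝ)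
    (M : Matrix (BIx n) (BIx n) ℝ) (k l : Fin r) (B : Matrix (Fin (n k)) (Fin (n l)) ℝ) :
    singleBlock i j A * M * singleBlock k l B = singleBlock i l (A * blk M j k * B) := by
  ext a b : 1
  rw [Matrix.mul_assoc, blk_singleBlock_mul, blk_mul_singleBlock, blk_singleBlock]
  simp only [Matrix.mul_assoc]

lemma transpose_singleBlock (i j : Fin r) (A : Matrix (Fin (n i)) (Fin (n j)) ℝ) :
    (singleBlock i j A)ᵀ = singleBlock j i Aᵀ := by
  ext k l : 1
  rw [blk_transpose, blk_singleBlock, blk_singleBlock]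
  simp only [Matrix.transpose_mul, ← blk_transpose, Matrix.transpose_one, Matrix.mul_assoc]

lemma singleBlock_mul_singleBlock (i j k : Fin r) (A : Matrix (Fin (n i)) (Fin (n j)) ℝ)
    (B : Matrix (Fin (n j)) (Fin (n k)) ℝ) :
    singleBlock i j A * singleBlock j k B = singleBlock i k (A * B) := by
  ext a b : 1
  rw [blk_singleBlock_mul, blk_singleBlock, blk_singleBlock, blk_one_self]
  simp only [Matrix.one_mul, Matrix.mul_assoc]

lemma singleBlock_mul_singleBlock_of_ne {i j k l : Fin r} (h : j ≠ k)
    (A : Matrix (Fin (n i)) (Fin (n j)) ℝ) (B : Matrix (Fin (n k)) (Fin (n l)) ℝ) :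
    singleBlock i j A * singleBlock k l B = 0 := by
  ext a b : 1
  rw [blk_singleBlock_mul, blk_singleBlock, blk_one_of_ne h]
  simp

lemma singleBlock_apply_of_ne {i j : Fin r} (A : Matrix (Fin (n i)) (Fin (n j)) ℝ)
    {p : BIx n} (hp : p.1 ≠ i) (q : BIx n) : singleBlock i j A p q = 0 := by
  simp [singleBlock, hp]

lemma singleBlock_mul_mulVec_apply_of_ne {i j : Fin r} (A : Matrix (Fin (n i)) (Fin (n j)) ℝ)
    (M : Matrix (BIx n) (BIx n) ℝ) (v : BIx n → ℝ) {p : BIx n} (hp : p.1 ≠ i) :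
    ((singleBlock i j A * M) *ᵥ v) p = 0 := by
  simp [Matrix.mulVec, dotProduct, Matrix.mul_apply, singleBlock_apply_of_ne _ hp]

end Blocks

/-- Left multiplication by `T` is injective on the finite-dimensional `S`, hence surjective. -/
lemma Subalgebra.matrix_inv_mem {ι K : Type*} [Fintype ι] [DecidableEq ι] [Field K]
    (S : Subalgebra K (Matrix ι ι K)) {T : Matrix ι ι K} (hT : T ∈ S) (h : IsUnit T.det) :
    T⁻¹ ∈ S := by
  have hinj : Function.Injective (LinearMap.mulLeft K (⟨T, hT⟩ : S)) := by
    rw [← LinearMap.ker_eq_bot, LinearMap.ker_eq_bot']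
    intro x hx
    have hTx : T * x = 0 := congrArg Subtype.val hx
    apply Subtype.ext
    rw [← Matrix.one_mul (x : Matrix ι ι K), ← Matrix.nonsing_inv_mul T h, Matrix.mul_assoc,
      hTx, Matrix.mul_zero]
    rfl
  obtain ⟨y, hy⟩ := LinearMap.injective_iff_surjective.mp hinj 1
  rw [Matrix.inv_eq_right_inv (congrArg Subtype.val hy)]
  exact y.2

def IshiV1 {n : Fin r → ℕ} (Vb : ∀ i j : Fin r, Submodule ℝ (Matrix (Fin (n i)) (Fin (n j)) ℝ)) :
    Prop :=
  ∀ i j k : Fin r, i ≤ j → j ≤ k → ∀ A ∈ Vb i j, ∀ B ∈ Vb j k, A * B ∈ Vb i k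

def IshiV2 {n : Fin r → ℕ} (Vb : ∀ i j : Fin r, Submodule ℝ (Matrix (Fin (n i)) (Fin (n j)) ℝ)) :
    Prop :=
  ∀ i j k : Fin r, i ≤ j → j < k → ∀ A ∈ Vb i j, ∀ B ∈ Vb i k, Aᵀ * B ∈ Vb j k

def IshiV3 {n : Fin r → ℕ} (Vb : ∀ i j : Fin r, Submodule ℝ (Matrix (Fin (n i)) (Fin (n j)) ℝ)) :
    Prop :=
  ∀ i j : Fin r, i ≤ j → ∀ A ∈ Vb i j, ∃ c : ℝ, Aᵀ * A = c • (1 : Matrix (Fin (n j)) (Fin (n j)) ℝ)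

def HasScalarDiagBlocks {n : Fin r → ℕ}
    (Vb : ∀ i j : Fin r, Submodule ℝ (Matrix (Fin (n i)) (Fin (n j)) ℝ)) : Prop :=
  ∀ i : Fin r, Vb i i = Submodule.span ℝ {(1 : Matrix (Fin (n i)) (Fin (n i)) ℝ)}

section Triangular

variable {n : Fin r → ℕ} {Vb : ∀ i j : Fin r, Submodule ℝ (Matrix (Fin (n i)) (Fin (n j)) ℝ)}

lemma HasScalarDiagBlocks.mem_iff (hdiag : HasScalarDiagBlocks Vb) {i : Fin r}
    {A : Matrix (Fin (n i)) (Fin (n i)) ℝ} : A ∈ Vb i i ↔ ∃ c : ℝ, A = c • 1 := by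
  simp only [hdiag i, Submodule.mem_span_singleton, eq_comm]

lemma mem_TT_iff (hdiag : HasScalarDiagBlocks Vb) {T : Matrix (BIx n) (BIx n) ℝ} :
    T ∈ TT n Vb ↔ T.BlockTriangular Sigma.fst ∧ ∀ i j : Fin r, i ≤ j → blk T i j ∈ Vb i j := by
  rw [blockTriangular_iff_blk]
  refine ⟨fun ⟨hlow, hdg, hup⟩ => ⟨hlow, fun i j hij => ?_⟩,
    fun ⟨hlow, hup⟩ => ⟨hlow, fun i => hdiag.mem_iff.mp (hup i i le_rfl),
      fun i j hij => hup i j hij.le⟩⟩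
  rcases hij.lt_or_eq with hij | rfl
  · exact hup i j hij
  · exact hdiag.mem_iff.mpr (hdg i)

lemma mem_TTpp_iff {T : Matrix (BIx n) (BIx n) ℝ} :
    T ∈ TTpp n Vb ↔ T ∈ TT n Vb ∧ ∀ i : Fin r, ∃ c : ℝ, 0 < c ∧ blk T i i = c • 1 := by
  refine ⟨fun ⟨hlow, hdg, hup⟩ => ⟨⟨hlow, fun i => ?_, hup⟩, hdg⟩,
    fun ⟨⟨hlow, _, hup⟩, hdg⟩ => ⟨hlow, hdg, hup⟩⟩
  obtain ⟨c, -, hc⟩ := hdg i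
  exact ⟨c, hc⟩

def ishiAlgebra (hdiag : HasScalarDiagBlocks Vb) (h1 : IshiV1 Vb) :
    Subalgebra ℝ (Matrix (BIx n) (BIx n) ℝ) where
  carrier := TT n Vb
  mul_mem' {T U} hT hU := by
    rw [mem_TT_iff hdiag] at *
    refine ⟨hT.1.mul hU.1, fun i j hij => ?_⟩
    rw [blk_mul]
    refine Submodule.sum_mem _ fun k _ => ?_
    by_cases hik : i ≤ k
    · by_cases hkj : k ≤ j
      · exact h1 i k j hik hkj _ (hT.2 i k hik) _ (hU.2 k j hkj)
      · rw [hU.1.blk_eq_zero (not_le.mp hkj), Matrix.mul_zero]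
        exact zero_mem _
    · rw [hT.1.blk_eq_zero (not_le.mp hik), Matrix.zero_mul]
      exact zero_mem _
  add_mem' {T U} hT hU := by
    rw [mem_TT_iff hdiag] at *
    exact ⟨hT.1.add hU.1, fun i j hij => by
      rw [blk_add]; exact add_mem (hT.2 i j hij) (hU.2 i j hij)⟩
  algebraMap_mem' c := by
    rw [mem_TT_iff hdiag, Algebra.algebraMap_eq_smul_one]
    refine ⟨blockTriangular_iff_blk.mpr fun i j h => ?_, fun i j hij => ?_⟩
    · rw [blk_smul, blk_one_of_ne h.ne', smul_zero]
    rcases hij.lt_or_eq with hij | rfl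
    · rw [blk_smul, blk_one_of_ne hij.ne, smul_zero]
      exact zero_mem _
    · rw [blk_smul, blk_one_self]
      exact hdiag.mem_iff.mpr ⟨c, rfl⟩

lemma det_pos_of_mem_TTpp {T : Matrix (BIx n) (BIx n) ℝ} (hT : T ∈ TTpp n Vb) : 0 < T.det := by
  have htri : T.BlockTriangular Sigma.fst := blockTriangular_iff_blk.mpr hT.1
  rw [htri.det]
  refine Finset.prod_pos fun i _ => ?_
  obtain ⟨c, hc, hTc⟩ := hT.2.1 i
  have hsq : T.toSquareBlock Sigma.fst i = c • 1 := by
    ext ⟨⟨k, a⟩, hk⟩ ⟨⟨l, b⟩, hl⟩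
    dsimp only at hk hl
    subst hk hl
    simpa [Matrix.toSquareBlock_def, Matrix.one_apply] using congrFun₂ hTc a b
  rw [hsq, Matrix.det_smul, Matrix.det_one, mul_one]
  positivity

lemma isUnit_det_of_mem_TTpp {T : Matrix (BIx n) (BIx n) ℝ} (hT : T ∈ TTpp n Vb) :
    IsUnit T.det :=
  (det_pos_of_mem_TTpp hT).ne'.isUnit

lemma mul_mem_TTpp (hdiag : HasScalarDiagBlocks Vb) (h1 : IshiV1 Vb)
    {T U : Matrix (BIx n) (BIx n) ℝ} (hT : T ∈ TTpp n Vb) (hU : U ∈ TTpp n Vb) :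
    T * U ∈ TTpp n Vb := by
  rw [mem_TTpp_iff] at *
  refine ⟨(ishiAlgebra hdiag h1).mul_mem hT.1 hU.1, fun i => ?_⟩
  obtain ⟨c, hc, hTc⟩ := hT.2 i
  obtain ⟨d, hd, hUd⟩ := hU.2 i
  refine ⟨c * d, mul_pos hc hd, ?_⟩
  rw [(blockTriangular_iff_blk.mpr hT.1.1).blk_mul_self (blockTriangular_iff_blk.mpr hU.1.1),
    hTc, hUd, Matrix.smul_mul, Matrix.mul_smul, Matrix.one_mul, smul_smul]

lemma inv_mem_TTpp (hdiag : HasScalarDiagBlocks Vb) (h1 : IshiV1 Vb)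
    {T : Matrix (BIx n) (BIx n) ℝ} (hT : T ∈ TTpp n Vb) : T⁻¹ ∈ TTpp n Vb := by
  have hdet := isUnit_det_of_mem_TTpp hT
  have hinv : T⁻¹ ∈ TT n Vb :=
    (ishiAlgebra hdiag h1).matrix_inv_mem (mem_TTpp_iff.mp hT).1 hdet
  refine mem_TTpp_iff.mpr ⟨hinv, fun i => ?_⟩
  obtain ⟨c, hc, hTc⟩ := hT.2.1 i
  refine ⟨c⁻¹, inv_pos.mpr hc, ?_⟩
  have h := (blockTriangular_iff_blk.mpr hT.1).blk_mul_self (blockTriangular_iff_blk.mpr hinv.1) i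
  rw [Matrix.mul_nonsing_inv T hdet, blk_one_self, hTc, Matrix.smul_mul, Matrix.one_mul] at h
  rw [h, smul_smul, inv_mul_cancel₀ hc.ne', one_smul]

end Triangular

section Conjugation

variable {n : Fin r → ℕ} {Vb : ∀ i j : Fin r, Submodule ℝ (Matrix (Fin (n i)) (Fin (n j)) ℝ)}

lemma transpose_mul_add_mem (hdiag : HasScalarDiagBlocks Vb) (h3 : IshiV3 Vb) {i j : Fin r}
    (hij : i ≤ j) {A B : Matrix (Fin (n i)) (Fin (n j)) ℝ} (hA : A ∈ Vb i j) (hB : B ∈ Vb i j) :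
    Aᵀ * B + Bᵀ * A ∈ Vb j j := by
  obtain ⟨a, ha⟩ := h3 i j hij A hA
  obtain ⟨b, hb⟩ := h3 i j hij B hB
  obtain ⟨c, hc⟩ := h3 i j hij (A + B) (add_mem hA hB)
  have hpolar : Aᵀ * B + Bᵀ * A = (A + B)ᵀ * (A + B) - Aᵀ * A - Bᵀ * B := by
    simp only [Matrix.transpose_add, Matrix.add_mul, Matrix.mul_add]
    abel
  rw [hpolar, hc, ha, hb, ← sub_smul, ← sub_smul]
  exact hdiag.mem_iff.mpr ⟨_, rfl⟩

lemma blk_transpose_mul_mul (T X : Matrix (BIx n) (BIx n) ℝ) (i j : Fin r) :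
    blk (Tᵀ * X * T) i j = ∑ k, ∑ l, (blk T k i)ᵀ * blk X k l * blk T l j := by
  simp only [blk_mul, Matrix.sum_mul, blk_transpose]
  exact Finset.sum_comm

/-- The summands of the `(i, j)` block of `Tᵀ X T` (see `blk_transpose_mul_mul`) have the shape
to which [V2] (for `i < j`) or polarized [V3] (for `i = j`) applies. -/
lemma exists_transpose_mul_eq_summand (hdiag : HasScalarDiagBlocks Vb) (h1 : IshiV1 Vb)
    {T X : Matrix (BIx n) (BIx n) ℝ} (hT : T ∈ TT n Vb) (hX : X ∈ Vset n Vb) (i j k l : Fin r) :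
    ∃ m ≤ i, ∃ A ∈ Vb m i, ∃ B ∈ Vb m j, (blk T k i)ᵀ * blk X k l * blk T l j = Aᵀ * B := by
  obtain ⟨hlow, hup⟩ := (mem_TT_iff hdiag).mp hT
  by_cases hki : k ≤ i
  swap
  · refine ⟨i, le_rfl, 0, zero_mem _, 0, zero_mem _, ?_⟩
    simp [hlow.blk_eq_zero (not_le.mp hki)]
  by_cases hlj : l ≤ j
  swap
  · refine ⟨i, le_rfl, 0, zero_mem _, 0, zero_mem _, ?_⟩
    simp [hlow.blk_eq_zero (not_le.mp hlj)]
  rcases le_total k l with hkl | hlk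
  · exact ⟨k, hki, _, hup k i hki, _, h1 k l j hkl hlj _ (hX.2 k l hkl) _ (hup l j hlj),
      Matrix.mul_assoc _ _ _⟩
  · refine ⟨l, hlk.trans hki, _, h1 l k i hlk hki _ (hX.2 l k hlk) _ (hup k i hki), _,
      hup l j hlj, ?_⟩
    rw [Matrix.transpose_mul, hX.1.blk_eq l k]

lemma conj_mem_Vset (hdiag : HasScalarDiagBlocks Vb) (h1 : IshiV1 Vb) (h2 : IshiV2 Vb)
    (h3 : IshiV3 Vb) {T X : Matrix (BIx n) (BIx n) ℝ} (hT : T ∈ TT n Vb) (hX : X ∈ Vset n Vb) :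
    Tᵀ * X * T ∈ Vset n Vb := by
  have hsymm : (Tᵀ * X * T).IsSymm := by
    simp [Matrix.IsSymm, Matrix.transpose_mul, hX.1.eq, Matrix.mul_assoc]
  refine ⟨hsymm, fun i j hij => ?_⟩
  have hsummand := exists_transpose_mul_eq_summand hdiag h1 hT hX
  rcases hij.lt_or_eq with hij | rfl
  · rw [blk_transpose_mul_mul]
    refine Submodule.sum_mem _ fun k _ => Submodule.sum_mem _ fun l _ => ?_
    obtain ⟨m, hm, A, hA, B, hB, hAB⟩ := hsummand i j k l
    exact hAB ▸ h2 m i j hm hij A hA B hB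
  · have hsum : blk (Tᵀ * X * T) i i + (blk (Tᵀ * X * T) i i)ᵀ ∈ Vb i i := by
      rw [blk_transpose_mul_mul, Matrix.transpose_sum, ← Finset.sum_add_distrib]
      refine Submodule.sum_mem _ fun k _ => ?_
      rw [Matrix.transpose_sum, ← Finset.sum_add_distrib]
      refine Submodule.sum_mem _ fun l _ => ?_
      obtain ⟨m, hm, A, hA, B, hB, hAB⟩ := hsummand i i k l
      rw [hAB, Matrix.transpose_mul, Matrix.transpose_transpose]
      exact transpose_mul_add_mem hdiag h3 hm hA hB
    rw [← hsymm.blk_eq, ← two_smul ℝ] at hsum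
    simpa using Submodule.smul_mem _ (2⁻¹ : ℝ) hsum

lemma conj_posDef {T X : Matrix (BIx n) (BIx n) ℝ} (hT : IsUnit T.det) (hX : X.PosDef) :
    (Tᵀ * X * T).PosDef := by
  simpa [Matrix.conjTranspose_eq_transpose_of_trivial] using
    hX.conjTranspose_mul_mul_same (Matrix.mulVec_injective_iff_isUnit.mpr
      ((Matrix.isUnit_iff_isUnit_det T).mpr hT))

lemma conj_mul_eq_conj_conj (T U X : Matrix (BIx n) (BIx n) ℝ) :
    (T * U)ᵀ * X * (T * U) = Uᵀ * (Tᵀ * X * T) * U := by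
  simp only [Matrix.transpose_mul, Matrix.mul_assoc]

lemma conj_mul_inv_conj {T : Matrix (BIx n) (BIx n) ℝ} (hT : IsUnit T.det)
    (X : Matrix (BIx n) (BIx n) ℝ) : T⁻¹ᵀ * (Tᵀ * X * T) * T⁻¹ = X := by
  rw [← conj_mul_eq_conj_conj, Matrix.mul_nonsing_inv T hT]
  simp

lemma conj_inv_mul_conj {T : Matrix (BIx n) (BIx n) ℝ} (hT : IsUnit T.det)
    (X : Matrix (BIx n) (BIx n) ℝ) : Tᵀ * (T⁻¹ᵀ * X * T⁻¹) * T = X := by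
  rw [← conj_mul_eq_conj_conj, Matrix.nonsing_inv_mul T hT]
  simp

lemma conj_bijOn_Kcone (hdiag : HasScalarDiagBlocks Vb) (h1 : IshiV1 Vb) (h2 : IshiV2 Vb)
    (h3 : IshiV3 Vb) {T : Matrix (BIx n) (BIx n) ℝ} (hT : T ∈ TTpp n Vb) :
    Set.BijOn (fun X => Tᵀ * X * T) (Kcone n Vb) (Kcone n Vb) := by
  have hmaps : ∀ {S}, S ∈ TTpp n Vb → Set.MapsTo (fun X => Sᵀ * X * S) (Kcone n Vb) (Kcone n Vb) :=
    fun hS X hX => ⟨conj_posDef (isUnit_det_of_mem_TTpp hS) hX.1,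
      conj_mem_Vset hdiag h1 h2 h3 (mem_TTpp_iff.mp hS).1 hX.2⟩
  have hdet := isUnit_det_of_mem_TTpp hT
  exact Set.InvOn.bijOn ⟨fun X _ => conj_mul_inv_conj hdet X, fun X _ => conj_inv_mul_conj hdet X⟩
    (hmaps hT) (hmaps (inv_mem_TTpp hdiag h1 hT))

end Conjugation

lemma dotProduct_transpose_mul_mul_mulVec {ι : Type*} [Fintype ι] (M R : Matrix ι ι ℝ)
    (v : ι → ℝ) : v ⬝ᵥ (Mᵀ * R * M) *ᵥ v = (M *ᵥ v) ⬝ᵥ R *ᵥ (M *ᵥ v) := by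
  rw [← Matrix.mulVec_mulVec, ← Matrix.mulVec_mulVec, Matrix.dotProduct_mulVec v Mᵀ,
    Matrix.vecMul_transpose]

lemma sub_inv_smul_mul_mul_eq_conj {ι : Type*} [Fintype ι] [DecidableEq ι]
    {R P : Matrix ι ι ℝ} (hR : R.IsSymm) (hP : Pᵀ = P) {d : ℝ} (hd : d ≠ 0)
    (hPRP : P * R * P = d • P) :
    R - d⁻¹ • (R * P * R) = (1 - d⁻¹ • (P * R))ᵀ * R * (1 - d⁻¹ • (P * R)) := by
  have hRPRPR : R * P * R * (P * R) = d • (R * P * R) := by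
    calc R * P * R * (P * R) = R * (P * R * P) * R := by simp only [Matrix.mul_assoc]
      _ = d • (R * P * R) := by rw [hPRP, Matrix.mul_smul, Matrix.smul_mul]
  simp only [Matrix.transpose_sub, Matrix.transpose_one, Matrix.transpose_smul,
    Matrix.transpose_mul, hP, hR.eq, Matrix.sub_mul, Matrix.mul_sub, Matrix.one_mul,
    Matrix.mul_one, Matrix.smul_mul, Matrix.mul_smul, hRPRPR, smul_smul]
  rw [inv_mul_cancel₀ hd, one_smul]
  simp only [Matrix.mul_assoc, sub_self, smul_zero, sub_zero]

section Cholesky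

variable {n : Fin r → ℕ} {Vb : ∀ i j : Fin r, Submodule ℝ (Matrix (Fin (n i)) (Fin (n j)) ℝ)}

/-- The Schur complement left after `k` steps of block Cholesky elimination. -/
def IsTrailingPosDef (Vb : ∀ i j : Fin r, Submodule ℝ (Matrix (Fin (n i)) (Fin (n j)) ℝ))
    (k : ℕ) (R : Matrix (BIx n) (BIx n) ℝ) : Prop :=
  R ∈ Vset n Vb ∧ (∀ a b : Fin r, a.1 < k → blk R a b = 0) ∧
    ∀ v : BIx n → ℝ, v ≠ 0 → (∀ p : BIx n, p.1.1 < k → v p = 0) → 0 < v ⬝ᵥ R *ᵥ v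

def IsTrailingFactor (Vb : ∀ i j : Fin r, Submodule ℝ (Matrix (Fin (n i)) (Fin (n j)) ℝ))
    (k : ℕ) (T : Matrix (BIx n) (BIx n) ℝ) : Prop :=
  (∀ a b : Fin r, b < a ∨ a.1 < k → blk T a b = 0) ∧
    (∀ a : Fin r, k ≤ a.1 → ∃ c : ℝ, 0 < c ∧ blk T a a = c • 1) ∧
    ∀ a b : Fin r, a < b → blk T a b ∈ Vb a b

lemma add_pivotRows_transpose_mul_self {k : ℕ} {R : Matrix (BIx n) (BIx n) ℝ} (hR : R.IsSymm)
    {hk : k < r} {d : ℝ} (hd : 0 < d)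
    {T : Matrix (BIx n) (BIx n) ℝ} (hT : IsTrailingFactor Vb (k + 1) T) :
    (T + (√d)⁻¹ • (singleBlock ⟨k, hk⟩ ⟨k, hk⟩ 1 * R))ᵀ
        * (T + (√d)⁻¹ • (singleBlock ⟨k, hk⟩ ⟨k, hk⟩ 1 * R))
      = Tᵀ * T + d⁻¹ • (R * singleBlock ⟨k, hk⟩ ⟨k, hk⟩ 1 * R) := by
  set i : Fin r := ⟨k, hk⟩
  set P : Matrix (BIx n) (BIx n) ℝ := singleBlock i i 1
  have hPt : Pᵀ = P := by rw [transpose_singleBlock, Matrix.transpose_one]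
  have hPT : P * T = 0 := by
    ext a b : 1
    rw [blk_singleBlock_mul, hT.1 i b (Or.inr k.lt_succ_self), Matrix.mul_zero, blk_zero]
  have hTP : Tᵀ * P = 0 := by rw [← hPt, ← Matrix.transpose_mul, hPT, Matrix.transpose_zero]
  have hPP : P * P = P := by rw [singleBlock_mul_singleBlock, Matrix.one_mul]
  have hsq : (√d)⁻¹ * (√d)⁻¹ = d⁻¹ := by rw [← mul_inv, Real.mul_self_sqrt hd.le]
  simp only [Matrix.transpose_add, Matrix.transpose_smul, Matrix.transpose_mul, hPt, hR.eq,
    Matrix.add_mul, Matrix.mul_add, Matrix.smul_mul, Matrix.mul_smul]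
  rw [← Matrix.mul_assoc, hTP, Matrix.mul_assoc R P T, hPT, Matrix.mul_assoc R P (P * R),
    ← Matrix.mul_assoc P P R, hPP]
  simp only [Matrix.zero_mul, Matrix.mul_zero, smul_zero, zero_add, add_zero, smul_smul, hsq,
    Matrix.mul_assoc]

namespace IsTrailingPosDef

variable {k : ℕ} {R : Matrix (BIx n) (BIx n) ℝ}

lemma blk_eq_zero_right (h : IsTrailingPosDef Vb k R) (a : Fin r) {b : Fin r} (hb : b.1 < k) :
    blk R a b = 0 := by
  rw [h.1.1.blk_eq, h.2.1 b a hb, Matrix.transpose_zero]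

lemma exists_pivot (hdiag : HasScalarDiagBlocks Vb) (h : IsTrailingPosDef Vb k R) (hk : k < r) :
    ∃ d : ℝ, 0 < d ∧ blk R ⟨k, hk⟩ ⟨k, hk⟩ = d • 1 := by
  set i : Fin r := ⟨k, hk⟩
  obtain ⟨d, hd⟩ := hdiag.mem_iff.mp (h.1.2 i i le_rfl)
  cases isEmpty_or_nonempty (Fin (n i)) with
  | inl => exact ⟨1, one_pos, Subsingleton.elim _ _⟩
  | inr hne =>
    obtain ⟨a⟩ := hne
    refine ⟨d, ?_, hd⟩
    have hpos := h.2.2 (Pi.single ⟨i, a⟩ 1) (by simp) fun p hp =>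
      Pi.single_eq_of_ne (fun hpa => hp.ne (by rw [hpa])) _
    have hdiag_entry : R ⟨i, a⟩ ⟨i, a⟩ = d := by simpa using congrFun₂ hd a a
    simpa [hdiag_entry] using hpos

lemma succ (hdiag : HasScalarDiagBlocks Vb) (h2 : IshiV2 Vb) (h3 : IshiV3 Vb)
    (h : IsTrailingPosDef Vb k R) {hk : k < r} {d : ℝ} (hd : 0 < d)
    (hRd : blk R ⟨k, hk⟩ ⟨k, hk⟩ = d • 1) :
    IsTrailingPosDef Vb (k + 1) (R - d⁻¹ • (R * singleBlock ⟨k, hk⟩ ⟨k, hk⟩ 1 * R)) := by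
  set i : Fin r := ⟨k, hk⟩
  set P : Matrix (BIx n) (BIx n) ℝ := singleBlock i i 1
  have hblk : ∀ a b, blk (R - d⁻¹ • (R * P * R)) a b
      = blk R a b - d⁻¹ • (blk R a i * blk R i b) := fun a b => by
    rw [blk_sub, blk_smul, blk_mul_singleBlock_mul, Matrix.mul_one]
  have hPt : Pᵀ = P := by rw [transpose_singleBlock, Matrix.transpose_one]
  refine ⟨⟨?_, fun a b hab => ?_⟩, fun a b ha => ?_, fun v hv hsupp => ?_⟩
  · simp only [Matrix.IsSymm, Matrix.transpose_sub, Matrix.transpose_smul, Matrix.transpose_mul,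
      h.1.1.eq, hPt, Matrix.mul_assoc]
  · rw [hblk]
    by_cases hia : i ≤ a
    · refine sub_mem (h.1.2 a b hab) (Submodule.smul_mem _ _ ?_)
      rw [h.1.1.blk_eq i a]
      rcases hab.lt_or_eq with hab | rfl
      · exact h2 i a b hia hab _ (h.1.2 i a hia) _ (h.1.2 i b (hia.trans hab.le))
      · obtain ⟨c, hc⟩ := h3 i a hia _ (h.1.2 i a hia)
        exact hc ▸ hdiag.mem_iff.mpr ⟨c, rfl⟩
    · rw [h.2.1 a i (not_le.mp hia), Matrix.zero_mul, smul_zero, sub_zero]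
      exact h.1.2 a b hab
  · rw [hblk]
    by_cases hai : a = i
    · subst hai
      rw [hRd, Matrix.smul_mul, Matrix.one_mul, smul_smul, inv_mul_cancel₀ hd.ne', one_smul,
        sub_self]
    · have ha' : a.1 < k := lt_of_le_of_ne (Nat.lt_succ_iff.mp ha) fun h => hai (Fin.ext h)
      rw [h.2.1 a b ha', h.2.1 a i ha', Matrix.zero_mul, smul_zero, sub_zero]
  · -- `R - d⁻¹ R P R = Mᵀ R M` with `M v = v` off the pivot block
    set M : Matrix (BIx n) (BIx n) ℝ := 1 - d⁻¹ • (P * R)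
    have hPRP : P * R * P = d • P := by
      rw [singleBlock_mul_mul_singleBlock, hRd, Matrix.one_mul, Matrix.mul_one, singleBlock_smul]
    have hMv : ∀ p : BIx n, p.1 ≠ i → (M *ᵥ v) p = v p := fun p hp => by
      simp [M, Matrix.sub_mulVec, Matrix.smul_mulVec, P,
        singleBlock_mul_mulVec_apply_of_ne 1 R v hp]
    obtain ⟨p, hp⟩ := Function.ne_iff.mp hv
    have hpi : p.1 ≠ i := fun hpi => hp (hsupp p (by simp [hpi, i]))
    rw [sub_inv_smul_mul_mul_eq_conj h.1.1 hPt hd.ne' hPRP, dotProduct_transpose_mul_mul_mulVec]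
    refine h.2.2 _ (fun h0 => hp ?_) fun q hq => ?_
    · rw [← hMv p hpi, h0, Pi.zero_apply]
    · rw [hMv q fun hqi => hq.ne (by simp [hqi, i])]
      exact hsupp q (hq.trans k.lt_succ_self)

lemma isTrailingFactor_add_pivotRows (h : IsTrailingPosDef Vb k R) {hk : k < r} {d : ℝ}
    (hd : 0 < d) (hRd : blk R ⟨k, hk⟩ ⟨k, hk⟩ = d • 1) {T : Matrix (BIx n) (BIx n) ℝ}
    (hT : IsTrailingFactor Vb (k + 1) T) :
    IsTrailingFactor Vb k (T + (√d)⁻¹ • (singleBlock ⟨k, hk⟩ ⟨k, hk⟩ 1 * R)) := by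
  set i : Fin r := ⟨k, hk⟩
  have hTi : ∀ b, blk T i b = 0 := fun b => hT.1 i b (Or.inr k.lt_succ_self)
  have hki : ∀ a : Fin r, a ≠ i → k ≤ a.1 → k + 1 ≤ a.1 := fun a hai hka =>
    lt_of_le_of_ne hka fun h => hai (Fin.ext h.symm)
  refine ⟨fun a b hab => ?_, fun a ha => ?_, fun a b hab => ?_⟩ <;>
    rw [blk_add, blk_smul] <;> by_cases hai : a = i
  · subst hai
    have hb : b.1 < k := by simpa [i, Fin.lt_def] using hab
    rw [hTi, blk_singleBlock_mul_self, h.blk_eq_zero_right _ hb, Matrix.mul_zero, smul_zero,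
      add_zero]
  · rw [blk_singleBlock_mul_of_ne hai, smul_zero, add_zero]
    exact hT.1 a b (hab.imp_right fun h => h.trans k.lt_succ_self)
  · subst hai
    refine ⟨(√d)⁻¹ * d, by positivity, ?_⟩
    rw [hTi, blk_singleBlock_mul_self, hRd, Matrix.one_mul, zero_add, smul_smul]
  · rw [blk_singleBlock_mul_of_ne hai, smul_zero, add_zero]
    exact hT.2.1 a (hki a hai ha)
  · subst hai
    rw [hTi, blk_singleBlock_mul_self, Matrix.one_mul, zero_add]
    exact Submodule.smul_mem _ _ (h.1.2 _ b hab.le)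
  · rw [blk_singleBlock_mul_of_ne hai, smul_zero, add_zero]
    exact hT.2.2 a b hab

lemma exists_factor (hdiag : HasScalarDiagBlocks Vb) (h2 : IshiV2 Vb) (h3 : IshiV3 Vb)
    (h : IsTrailingPosDef Vb k R) : ∃ T, IsTrailingFactor Vb k T ∧ Tᵀ * T = R := by
  induction hm : r - k generalizing k R with
  | zero =>
    have hR : R = 0 := by
      ext a b : 1
      exact h.2.1 a b (by omega)
    refine ⟨0, ⟨fun _ _ _ => rfl, fun a ha => absurd a.2 (by omega), fun _ _ _ => zero_mem _⟩,
      by rw [hR, Matrix.mul_zero]⟩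
  | succ m ih =>
    have hk : k < r := by omega
    obtain ⟨d, hd, hRd⟩ := h.exists_pivot hdiag hk
    obtain ⟨T, hT, hTR⟩ := ih (h.succ hdiag h2 h3 hd hRd) (by omega)
    refine ⟨_, h.isTrailingFactor_add_pivotRows hd hRd hT, ?_⟩
    rw [add_pivotRows_transpose_mul_self h.1.1 hd hT, hTR, sub_add_cancel]

end IsTrailingPosDef

lemma exists_mem_TTpp_transpose_mul_self_eq (hdiag : HasScalarDiagBlocks Vb) (h2 : IshiV2 Vb)
    (h3 : IshiV3 Vb) {X : Matrix (BIx n) (BIx n) ℝ} (hX : X ∈ Kcone n Vb) :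
    ∃ T ∈ TTpp n Vb, Tᵀ * T = X := by
  have h0 : IsTrailingPosDef Vb 0 X :=
    ⟨hX.2, fun _ _ h => absurd h (Nat.not_lt_zero _), fun v hv _ => by
      simpa using hX.1.dotProduct_mulVec_pos hv⟩
  obtain ⟨T, hT, hTX⟩ := h0.exists_factor hdiag h2 h3
  exact ⟨T, ⟨fun a b h => hT.1 a b (Or.inl h), fun a => hT.2.1 a a.1.zero_le, hT.2.2⟩, hTX⟩

end Cholesky

section SimplyTransitive

variable {n : Fin r → ℕ} {Vb : ∀ i j : Fin r, Submodule ℝ (Matrix (Fin (n i)) (Fin (n j)) ℝ)}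

/-- The transpose is the inverse, so it lies in `𝕋₊₊` too: the matrix is block diagonal, with
positive scalar diagonal blocks squaring to one. -/
lemma eq_one_of_mem_TTpp_of_transpose_mul_self (hdiag : HasScalarDiagBlocks Vb) (h1 : IshiV1 Vb)
    {C : Matrix (BIx n) (BIx n) ℝ} (hC : C ∈ TTpp n Vb) (h : Cᵀ * C = 1) : C = 1 := by
  have hCt : Cᵀ ∈ TTpp n Vb := Matrix.inv_eq_left_inv h ▸ inv_mem_TTpp hdiag h1 hC
  ext i j : 1
  rcases lt_trichotomy i j with hij | rfl | hij
  · rw [← Matrix.transpose_transpose (blk C i j), ← blk_transpose, hCt.1 j i hij,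
      blk_one_of_ne hij.ne, Matrix.transpose_zero]
  · obtain ⟨c, hc, hCc⟩ := hC.2.1 i
    have hblk := (blockTriangular_iff_blk.mpr hCt.1).blk_mul_self
      (blockTriangular_iff_blk.mpr hC.1) i
    rw [h, blk_transpose, hCc, blk_one_self, Matrix.transpose_smul, Matrix.transpose_one,
      Matrix.smul_mul, Matrix.one_mul, smul_smul] at hblk
    rw [hCc, blk_one_self]
    cases isEmpty_or_nonempty (Fin (n i)) with
    | inl => exact Subsingleton.elim _ _
    | inr hne =>
      obtain ⟨a⟩ := hne
      have hcc : c * c = 1 := by simpa using congrFun₂ hblk.symm a a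
      rw [show c = 1 by nlinarith, one_smul]
  · rw [hC.1 i j hij, blk_one_of_ne hij.ne']

lemma eq_of_mem_TTpp_of_transpose_mul_self_eq (hdiag : HasScalarDiagBlocks Vb) (h1 : IshiV1 Vb)
    {A B : Matrix (BIx n) (BIx n) ℝ} (hA : A ∈ TTpp n Vb) (hB : B ∈ TTpp n Vb)
    (h : Aᵀ * A = Bᵀ * B) : A = B := by
  have hdet := isUnit_det_of_mem_TTpp hA
  have hC : B * A⁻¹ = 1 := by
    refine eq_one_of_mem_TTpp_of_transpose_mul_self hdiag h1
      (mul_mem_TTpp hdiag h1 hB (inv_mem_TTpp hdiag h1 hA)) ?_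
    calc (B * A⁻¹)ᵀ * (B * A⁻¹) = A⁻¹ᵀ * (Bᵀ * B) * A⁻¹ := by
          simp only [Matrix.transpose_mul, Matrix.mul_assoc]
      _ = A⁻¹ᵀ * (Aᵀ * 1 * A) * A⁻¹ := by rw [← h, Matrix.mul_one]
      _ = 1 := conj_mul_inv_conj hdet 1
  rw [← Matrix.mul_one B, ← Matrix.nonsing_inv_mul A hdet, ← Matrix.mul_assoc, hC,
    Matrix.one_mul]

lemma existsUnique_mem_TTpp_conj_eq (hdiag : HasScalarDiagBlocks Vb) (h1 : IshiV1 Vb)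
    (h2 : IshiV2 Vb) (h3 : IshiV3 Vb) {X Y : Matrix (BIx n) (BIx n) ℝ} (hX : X ∈ Kcone n Vb)
    (hY : Y ∈ Kcone n Vb) : ∃! T, T ∈ TTpp n Vb ∧ Tᵀ * X * T = Y := by
  obtain ⟨A, hA, rfl⟩ := exists_mem_TTpp_transpose_mul_self_eq hdiag h2 h3 hX
  obtain ⟨B, hB, rfl⟩ := exists_mem_TTpp_transpose_mul_self_eq hdiag h2 h3 hY
  have hdet := isUnit_det_of_mem_TTpp hA
  have hgram : ∀ T : Matrix (BIx n) (BIx n) ℝ, Tᵀ * (Aᵀ * A) * T = (A * T)ᵀ * (A * T) := by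
    simp [Matrix.transpose_mul, Matrix.mul_assoc]
  refine ⟨A⁻¹ * B, ⟨mul_mem_TTpp hdiag h1 (inv_mem_TTpp hdiag h1 hA) hB, ?_⟩, ?_⟩
  · rw [hgram, ← Matrix.mul_assoc A, Matrix.mul_nonsing_inv A hdet, Matrix.one_mul]
  · rintro T ⟨hT, hTB⟩
    have hAT : A * T = B := eq_of_mem_TTpp_of_transpose_mul_self_eq hdiag h1
      (mul_mem_TTpp hdiag h1 hA hT) hB (hgram T ▸ hTB)
    rw [← hAT, ← Matrix.mul_assoc, Matrix.nonsing_inv_mul A hdet, Matrix.one_mul]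

end SimplyTransitive

section Converse

variable {n : Fin r → ℕ} {Vb : ∀ i j : Fin r, Submodule ℝ (Matrix (Fin (n i)) (Fin (n j)) ℝ)}

lemma one_mem_Vset (hdiag : HasScalarDiagBlocks Vb) :
    (1 : Matrix (BIx n) (BIx n) ℝ) ∈ Vset n Vb := by
  refine ⟨Matrix.transpose_one, fun i j hij => ?_⟩
  rcases hij.lt_or_eq with hij | rfl
  · rw [blk_one_of_ne hij.ne]
    exact zero_mem _
  · rw [blk_one_self]
    exact hdiag.mem_iff.mpr ⟨1, (one_smul ℝ _).symm⟩

def IsStrictlyUpper (Vb : ∀ i j : Fin r, Submodule ℝ (Matrix (Fin (n i)) (Fin (n j)) ℝ))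
    (N : Matrix (BIx n) (BIx n) ℝ) : Prop :=
  (∀ a b : Fin r, b ≤ a → blk N a b = 0) ∧ ∀ a b : Fin r, a < b → blk N a b ∈ Vb a b

lemma isStrictlyUpper_singleBlock {i j : Fin r} (hij : i < j)
    {A : Matrix (Fin (n i)) (Fin (n j)) ℝ} (hA : A ∈ Vb i j) :
    IsStrictlyUpper Vb (singleBlock i j A) := by
  refine ⟨fun a b hba => blk_singleBlock_of_ne ?_ A, fun a b _ => ?_⟩
  · rintro ⟨rfl, rfl⟩
    exact hba.not_gt hij
  · by_cases hab : a = i ∧ b = j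
    · obtain ⟨rfl, rfl⟩ := hab
      rwa [blk_singleBlock_self]
    · rw [blk_singleBlock_of_ne hab]
      exact zero_mem _

lemma IsStrictlyUpper.add {N N' : Matrix (BIx n) (BIx n) ℝ} (hN : IsStrictlyUpper Vb N)
    (hN' : IsStrictlyUpper Vb N') : IsStrictlyUpper Vb (N + N') :=
  ⟨fun a b hba => by rw [blk_add, hN.1 a b hba, hN'.1 a b hba, add_zero],
    fun a b hab => by rw [blk_add]; exact add_mem (hN.2 a b hab) (hN'.2 a b hab)⟩

lemma IsStrictlyUpper.one_add_mem_TTpp {N : Matrix (BIx n) (BIx n) ℝ}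
    (hN : IsStrictlyUpper Vb N) : 1 + N ∈ TTpp n Vb := by
  refine ⟨fun a b hab => ?_, fun a => ⟨1, one_pos, ?_⟩, fun a b hab => ?_⟩
  · rw [blk_add, blk_one_of_ne hab.ne', hN.1 a b hab.le, add_zero]
  · rw [blk_add, blk_one_self, hN.1 a a le_rfl, add_zero, one_smul]
  · rw [blk_add, blk_one_of_ne hab.ne, zero_add]
    exact hN.2 a b hab

lemma ishiV3_of_conj_mem_Vset (hdiag : HasScalarDiagBlocks Vb)
    (hmap : ∀ T ∈ TTpp n Vb, ∀ X ∈ Vset n Vb, Tᵀ * X * T ∈ Vset n Vb) : IshiV3 Vb := by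
  intro i j hij A hA
  rcases hij.lt_or_eq with hij | rfl
  · set T := 1 + singleBlock i j A
    have hmem := (hmap T (isStrictlyUpper_singleBlock hij hA).one_add_mem_TTpp 1
      (one_mem_Vset hdiag)).2 j j le_rfl
    have hblk : blk (Tᵀ * 1 * T) j j = 1 + Aᵀ * A := by
      simp [T, Matrix.transpose_add, transpose_singleBlock, Matrix.add_mul, Matrix.mul_add,
        singleBlock_mul_singleBlock, blk_singleBlock_of_ne, hij.ne']
    obtain ⟨c, hc⟩ := hdiag.mem_iff.mp (hblk ▸ hmem)
    exact ⟨c - 1, by rw [sub_smul, one_smul, ← hc, add_sub_cancel_left]⟩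
  · obtain ⟨c, rfl⟩ := hdiag.mem_iff.mp hA
    exact ⟨c * c, by simp [smul_smul]⟩

lemma ishiV2_of_conj_mem_Vset (hdiag : HasScalarDiagBlocks Vb)
    (hmap : ∀ T ∈ TTpp n Vb, ∀ X ∈ Vset n Vb, Tᵀ * X * T ∈ Vset n Vb) : IshiV2 Vb := by
  intro i j k hij hjk A hA B hB
  rcases hij.lt_or_eq with hij | rfl
  · have hik := hij.trans hjk
    set T := 1 + (singleBlock i j A + singleBlock i k B)
    have hmem := (hmap T ((isStrictlyUpper_singleBlock hij hA).add
      (isStrictlyUpper_singleBlock hik hB)).one_add_mem_TTpp 1 (one_mem_Vset hdiag)).2 j k hjk.le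
    have hblk : blk (Tᵀ * 1 * T) j k = Aᵀ * B := by
      simp [T, Matrix.transpose_add, transpose_singleBlock, Matrix.add_mul, Matrix.mul_add,
        singleBlock_mul_singleBlock, blk_singleBlock_of_ne, blk_one_of_ne, hij.ne', hik.ne',
        hjk.ne, hjk.ne']
    exact hblk ▸ hmem
  · obtain ⟨c, rfl⟩ := hdiag.mem_iff.mp hA
    simpa using Submodule.smul_mem _ c hB

lemma ishiV1_of_conj_mem_Vset (hdiag : HasScalarDiagBlocks Vb)
    (hmap : ∀ T ∈ TTpp n Vb, ∀ X ∈ Vset n Vb, Tᵀ * X * T ∈ Vset n Vb) : IshiV1 Vb := by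
  intro i j k hij hjk A hA B hB
  rcases hij.lt_or_eq with hij | rfl
  · rcases hjk.lt_or_eq with hjk | rfl
    · set T := 1 + singleBlock j k B
      set X := singleBlock i j A + singleBlock j i Aᵀ
      have hX : X ∈ Vset n Vb := by
        refine ⟨by simp [X, Matrix.IsSymm, transpose_singleBlock, add_comm], fun a b hab => ?_⟩
        have hba : ¬(a = j ∧ b = i) := fun ⟨ha, hb⟩ => hab.not_gt (ha ▸ hb ▸ hij)
        rw [blk_add, blk_singleBlock_of_ne hba, add_zero]
        by_cases hab' : a = i ∧ b = j
        · obtain ⟨rfl, rfl⟩ := hab'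
          rwa [blk_singleBlock_self]
        · rw [blk_singleBlock_of_ne hab']
          exact zero_mem _
      have hmem := (hmap T (isStrictlyUpper_singleBlock hjk hB).one_add_mem_TTpp X hX).2 i k
        (hij.trans hjk).le
      have hblk : blk (Tᵀ * X * T) i k = A * B := by
        simp [T, X, Matrix.transpose_add, transpose_singleBlock, Matrix.add_mul, Matrix.mul_add,
          singleBlock_mul_singleBlock, singleBlock_mul_singleBlock_of_ne, blk_singleBlock_of_ne,
          hij.ne, hij.ne', hjk.ne', (hij.trans hjk).ne, (hij.trans hjk).ne']
      exact hblk ▸ hmem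
    · obtain ⟨c, rfl⟩ := hdiag.mem_iff.mp hB
      simpa using Submodule.smul_mem _ c hA
  · obtain ⟨c, rfl⟩ := hdiag.mem_iff.mp hA
    simpa using Submodule.smul_mem _ c hB

end Converse

theorem ishi_axioms_iff_simply_transitive_general (r : ℕ)
    (n : Fin r → ℕ)
    (Vb : ∀ i j : Fin r, Submodule ℝ (Matrix (Fin (n i)) (Fin (n j)) ℝ))
    (hdiag : ∀ i : Fin r, Vb i i = Submodule.span ℝ {(1 : Matrix (Fin (n i)) (Fin (n i)) ℝ)}) :
    ((∀ i j k : Fin r, i ≤ j → j ≤ k → ∀ A ∈ Vb i j, ∀ B ∈ Vb j k, A * B ∈ Vb i k) ∧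
     (∀ i j k : Fin r, i ≤ j → j < k → ∀ A ∈ Vb i j, ∀ B ∈ Vb i k, Aᵀ * B ∈ Vb j k) ∧
     (∀ i j : Fin r, i ≤ j → ∀ A ∈ Vb i j,
        ∃ c : ℝ, Aᵀ * A = c • (1 : Matrix (Fin (n j)) (Fin (n j)) ℝ)))
    ↔
    ((∀ T ∈ TTpp n Vb, ∀ X ∈ Vset n Vb, Tᵀ * X * T ∈ Vset n Vb) ∧
     (∀ T ∈ TTpp n Vb, Set.BijOn (fun X => Tᵀ * X * T) (Kcone n Vb) (Kcone n Vb)) ∧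
     (∀ T ∈ TTpp n Vb, ∀ U ∈ TTpp n Vb, ∃ W ∈ TTpp n Vb,
        ∀ X ∈ Vset n Vb, Tᵀ * (Uᵀ * X * U) * T = Wᵀ * X * W) ∧
     (∀ T ∈ TTpp n Vb, ∃ U ∈ TTpp n Vb,
        ∀ X ∈ Vset n Vb, Uᵀ * (Tᵀ * X * T) * U = X ∧ Tᵀ * (Uᵀ * X * U) * T = X) ∧
     (∀ X ∈ Kcone n Vb, ∀ Y ∈ Kcone n Vb, ∃! T, T ∈ TTpp n Vb ∧ Tᵀ * X * T = Y)) := by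
  constructor
  · rintro ⟨h1, h2, h3⟩
    refine ⟨fun T hT X hX => conj_mem_Vset hdiag h1 h2 h3 (mem_TTpp_iff.mp hT).1 hX,
      fun T hT => conj_bijOn_Kcone hdiag h1 h2 h3 hT,
      fun T hT U hU => ⟨U * T, mul_mem_TTpp hdiag h1 hU hT,
        fun X _ => (conj_mul_eq_conj_conj U T X).symm⟩,
      fun T hT => ⟨T⁻¹, inv_mem_TTpp hdiag h1 hT, fun X _ =>
        ⟨conj_mul_inv_conj (isUnit_det_of_mem_TTpp hT) X,
          conj_inv_mul_conj (isUnit_det_of_mem_TTpp hT) X⟩⟩,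
      fun X hX Y hY => existsUnique_mem_TTpp_conj_eq hdiag h1 h2 h3 hX hY⟩
  · rintro ⟨hmap, -⟩
    exact ⟨ishiV1_of_conj_mem_Vset hdiag hmap, ishiV2_of_conj_mem_Vset hdiag hmap,
      ishiV3_of_conj_mem_Vset hdiag hmap⟩

/-- **Equivalence of the Ishi axioms with simple transitivity.**
The subspaces `Vb i j` satisfy the three Ishi axioms [V1], [V2], [V3] if and only if:
for every `T ∈ 𝕋₊₊` the map `𝒯_T : X ↦ Tᵀ·X·T` maps `V` into `V` and restricts to a bijection
of `K = S^n_{++} ∩ V` onto itself; the set of these restricted maps is a group under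
composition (closed under composition and inversion, with `T = I` giving the identity);
and this group acts simply transitively on `K`. -/
theorem ishi_axioms_iff_simply_transitive (r : ℕ) (hr : 1 ≤ r)
    (n : Fin r → ℕ) (hn : ∀ i, 0 < n i)
    (Vb : ∀ i j : Fin r, Submodule ℝ (Matrix (Fin (n i)) (Fin (n j)) ℝ))
    (hdiag : ∀ i : Fin r, Vb i i = Submodule.span ℝ {(1 : Matrix (Fin (n i)) (Fin (n i)) ℝ)}) :
    ((∀ i j k : Fin r, i ≤ j → j ≤ k → ∀ A ∈ Vb i j, ∀ B ∈ Vb j k, A * B ∈ Vb i k) ∧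
     (∀ i j k : Fin r, i ≤ j → j < k → ∀ A ∈ Vb i j, ∀ B ∈ Vb i k, Aᵀ * B ∈ Vb j k) ∧
     (∀ i j : Fin r, i ≤ j → ∀ A ∈ Vb i j,
        ∃ c : ℝ, Aᵀ * A = c • (1 : Matrix (Fin (n j)) (Fin (n j)) ℝ)))
    ↔
    ((∀ T ∈ TTpp n Vb, ∀ X ∈ Vset n Vb, Tᵀ * X * T ∈ Vset n Vb) ∧
     (∀ T ∈ TTpp n Vb, Set.BijOn (fun X => Tᵀ * X * T) (Kcone n Vb) (Kcone n Vb)) ∧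
     (∀ T ∈ TTpp n Vb, ∀ U ∈ TTpp n Vb, ∃ W ∈ TTpp n Vb,
        ∀ X ∈ Vset n Vb, Tᵀ * (Uᵀ * X * U) * T = Wᵀ * X * W) ∧
     (∀ T ∈ TTpp n Vb, ∃ U ∈ TTpp n Vb,
        ∀ X ∈ Vset n Vb, Uᵀ * (Tᵀ * X * T) * U = X ∧ Tᵀ * (Uᵀ * X * U) * T = X) ∧
     (∀ X ∈ Kcone n Vb, ∀ Y ∈ Kcone n Vb, ∃! T, T ∈ TTpp n Vb ∧ Tᵀ * X * T = Y)) :=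
  ishi_axioms_iff_simply_transitive_general r n Vb hdiag
end
end
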